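/- arXiv:1706.03617 — 3 statements merged into one kernel-verified Lean document; each statement's English description precedes it below -/
import Mathlib

section
/- The generating function for overpartitions satisfies the coefficient-wise congruence ∏_{n≥1} (1+q^n)/(1-q^n) ≡ 1 + 2·∑_{n≥1} q^(n^2) (mod 4). -/
open PowerSeries

/-- The formal power series `(1+q^k)/(1-q^k)` in `ℤ⟦q⟧`. -/
noncomputable def fps (k : ℕ) : PowerSeries ℤ :=
  (1 + (PowerSeries.X : PowerSeries ℤ) ^ k) *
    PowerSeries.invOfUnit (1 - (PowerSeries.X : PowerSeries ℤ) ^ k) 1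

/-- The number of overpartitions of `n`: the coefficient of `q^n` in
`∏_{k≥1} (1+q^k)/(1-q^k)`.  Since each factor with `k > n` contributes only `1`
to coefficients up to degree `n`, the product may be truncated at `k = n`. -/
noncomputable def pbar (n : ℕ) : ℤ :=
  PowerSeries.coeff n (∏ k ∈ Finset.Icc 1 n, fps k)

/-!
Since `(1 + q^k)/(1 - q^k) = 1 + 2 ∑_{j ≥ 1} q^(jk)` and
`(1 + 2a)(1 + 2b) ≡ 1 + 2(a + b) (mod 4)`, the product is `≡ 1 + 2 ∑_{n ≥ 1} d(n) q^n (mod 4)`,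
where `d(n)` counts the divisors of `n`. As `d(n) = ∏_p (v_p(n) + 1)`, it is odd exactly when every
`v_p(n)` is even, i.e. when `n` is a square.
-/

namespace PowerSeries

variable (R : Type*) [Ring R]

noncomputable def geomSeriesXPow (k : ℕ) : R⟦X⟧ :=
  mk fun m => if k ∣ m then 1 else 0

variable {R}

theorem coeff_geomSeriesXPow (k m : ℕ) :
    coeff m (geomSeriesXPow R k) = if k ∣ m then 1 else 0 :=
  coeff_mk _ _

theorem map_geomSeriesXPow {S : Type*} [Ring S] (f : R →+* S) (k : ℕ) :
    map f (geomSeriesXPow R k) = geomSeriesXPow S k := by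
  ext m
  simp [coeff_geomSeriesXPow, apply_ite f]

theorem one_sub_X_pow_mul_geomSeriesXPow {k : ℕ} (hk : k ≠ 0) :
    (1 - X ^ k) * geomSeriesXPow R k = 1 := by
  ext m
  rw [sub_mul, one_mul, map_sub, coeff_X_pow_mul', coeff_geomSeriesXPow, coeff_one]
  by_cases hkm : k ≤ m
  · obtain ⟨j, rfl⟩ := Nat.exists_eq_add_of_le hkm
    simp [hk, Nat.dvd_add_self_left, coeff_geomSeriesXPow]
  · have hdvd : k ∣ m ↔ m = 0 :=
      ⟨fun h => by_contra fun hm => hkm (Nat.le_of_dvd (by omega) h),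
        by rintro rfl; exact dvd_zero k⟩
    simp [hkm, hdvd]

end PowerSeries

theorem Finset.prod_one_add_two_mul_of_four_eq_zero {ι R : Type*} [CommRing R] (h4 : (4 : R) = 0)
    (s : Finset ι) (a : ι → R) : ∏ i ∈ s, (1 + 2 * a i) = 1 + 2 * ∑ i ∈ s, a i := by
  classical
  induction s using Finset.induction_on with
  | empty => simp
  | insert i s hi ih =>
    rw [prod_insert hi, sum_insert hi, ih]
    linear_combination (a i * ∑ j ∈ s, a j) * h4

theorem Nat.isSquare_iff_forall_even_factorization {n : ℕ} (hn : n ≠ 0) :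
    IsSquare n ↔ ∀ p, Even (n.factorization p) := by
  constructor
  · rintro ⟨m, rfl⟩ p
    have hm : m ≠ 0 := by rintro rfl; simp at hn
    simp [Nat.factorization_mul hm hm]
  · intro h
    refine ⟨n.factorization.prod fun p e => p ^ (e / 2), ?_⟩
    conv_lhs => rw [← Nat.prod_factorization_pow_eq_self hn]
    rw [Finsupp.prod, Finsupp.prod, ← Finset.prod_mul_distrib]
    refine Finset.prod_congr rfl fun p _ => ?_
    rw [← pow_add]
    obtain ⟨c, hc⟩ := h p
    congr 1
    omega

theorem Nat.odd_card_divisors_iff_isSquare {n : ℕ} (hn : n ≠ 0) :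
    Odd n.divisors.card ↔ IsSquare n := by
  rw [Nat.card_divisors hn, Nat.isSquare_iff_forall_even_factorization hn, ← Nat.not_even_iff_odd,
    even_iff_two_dvd, Prime.dvd_finsetProd_iff Nat.prime_two.prime, not_exists]
  refine forall_congr' fun p => ?_
  by_cases hp : p ∈ n.primeFactors
  · simp [hp, ← even_iff_two_dvd, Nat.even_add_one]
  · simp [hp, Finsupp.notMem_support_iff.mp (n.support_factorization ▸ hp)]

theorem ZMod.two_mul_natCast_eq_ite_odd (m : ℕ) :
    2 * (m : ZMod 4) = if Odd m then 2 else 0 := by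
  have h4 : (4 : ZMod 4) = 0 := by decide
  rcases Nat.even_or_odd' m with ⟨c, rfl | rfl⟩
  · simp only [Nat.not_odd_iff_even.mpr (even_two_mul c), if_false]
    push_cast
    linear_combination (c : ZMod 4) * h4
  · simp only [odd_two_mul_add_one c, if_true]
    push_cast
    linear_combination (c : ZMod 4) * h4

theorem fps_eq_one_add_two_mul {k : ℕ} (hk : k ≠ 0) :
    fps k = 1 + 2 * (geomSeriesXPow ℤ k - 1) := by
  have hgeom := one_sub_X_pow_mul_geomSeriesXPow (R := ℤ) hk
  have hinv : invOfUnit (1 - X ^ k : ℤ⟦X⟧) 1 = geomSeriesXPow ℤ k :=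
    left_inv_eq_right_inv (invOfUnit_mul _ _ (by simp [zero_pow hk])) hgeom
  rw [fps, hinv]
  linear_combination -hgeom

theorem intCast_pbar_eq_two_mul_card_divisors {n : ℕ} (hn : n ≠ 0) :
    (pbar n : ZMod 4) = 2 * n.divisors.card := by
  have hfps : ∀ k ∈ Finset.Icc 1 n,
      map (Int.castRingHom (ZMod 4)) (fps k) = 1 + 2 * (geomSeriesXPow (ZMod 4) k - 1) :=
    fun k hk => by
      rw [fps_eq_one_add_two_mul (by grind), map_add, map_mul, map_sub, map_geomSeriesXPow]
      simp [map_ofNat]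
  have h4 : (4 : (ZMod 4)⟦X⟧) = 0 := by
    rw [← map_ofNat C 4, show (4 : ZMod 4) = 0 by decide, map_zero]
  rw [pbar, ← eq_intCast (Int.castRingHom (ZMod 4)), ← coeff_map, map_prod,
    Finset.prod_congr rfl hfps, Finset.prod_one_add_two_mul_of_four_eq_zero h4, two_mul, two_mul,
    map_add, map_add, map_sum]
  simp only [map_sub, coeff_one, hn, if_false, coeff_geomSeriesXPow, sub_zero, zero_add,
    Finset.sum_boole]
  rw [← Finset.Ico_add_one_right_eq_Icc]
  rfl

/-- `∏_{k≥1} (1+q^k)/(1-q^k) ≡ 1 + 2·∑_{m≥1} q^(m²) (mod 4)` coefficient-wise. -/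
theorem overpartition_gen_congr_mod_four (n : ℕ) :
    pbar n ≡ (if n = 0 then 1 else if IsSquare n then 2 else 0) [ZMOD 4] := by
  rcases eq_or_ne n 0 with rfl | hn
  · simp [pbar]
  rw [if_neg hn, ← Nat.cast_ofNat, ← ZMod.intCast_eq_intCast_iff,
    intCast_pbar_eq_two_mul_card_divisors hn, ZMod.two_mul_natCast_eq_ite_odd]
  simp only [Nat.odd_card_divisors_iff_isSquare hn]
  split_ifs <;> simp
end

section
/- For all integers n ≥ 0, p̄(4n+3) ≡ 0 (mod 8). -/
open PowerSeries

/-!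
Gauss's identity `∏ₖ (1 - q^k)/(1 + q^k) = 1 + 2 T` with `T = ∑_{j ≥ 1} (-1)^j q^{j²}` makes the
overpartition series the inverse of `1 + 2 T`. Since `(1 + 2 T)(1 - 2 T + 4 T²) = 1 + 8 T³`, it is
congruent to `1 - 2 T + 4 T²` modulo 8, and `q^{4n+3}` occurs in neither `T` nor `T²` because a sum
of at most two squares is never `3 mod 4`.

Modulo `q^{N+1}`, Gauss's identity follows from three polynomial identities: the finite form
`∑_{|j| ≤ N} (-1)^j q^{j²} [2N, N+j]_q = (q; q²)_N`, proved by the `q`-Pascal recurrences;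
`[a+b, a]_q (q; q)_a = ∏_{b < k ≤ a+b} (1 - q^k) ≡ 1 mod q^{b+1}`; and Euler's
`(-q; q)_N (q; q²)_N = ∏_{N < k ≤ 2N} (1 - q^k) ≡ 1 mod q^{N+1}`.
-/

open Finset

theorem sum_Icc_comp_add_of_support {M : Type*} [AddCommMonoid M] {f : ℤ → M} {n : ℕ}
    (hf : ∀ j, f j ≠ 0 → j ∈ Icc (-n : ℤ) n) {a b c : ℤ} (ha : a + c ≤ -n) (hb : n ≤ b + c) :
    ∑ j ∈ Icc a b, f (j + c) = ∑ j ∈ Icc (-n : ℤ) n, f j := by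
  rw [show ∑ j ∈ Icc a b, f (j + c) = ∑ j ∈ Icc (a + c) (b + c), f j by
    rw [← map_add_right_Icc, sum_map]; rfl]
  exact (sum_subset (Icc_subset_Icc ha hb) fun j _ hj => not_not.mp (mt (hf j) hj)).symm

theorem sum_Icc_neg_eq_add_sum_add_neg {M : Type*} [AddCommMonoid M] (f : ℤ → M) (N : ℕ) :
    ∑ j ∈ Icc (-N : ℤ) N, f j = f 0 + ∑ j ∈ Icc 1 N, (f j + f (-j)) := by
  induction N with
  | zero => simp
  | succ N ih =>
    have hI : Icc (-(N + 1 : ℕ) : ℤ) (N + 1 : ℕ)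
        = insert (-(N + 1 : ℤ)) (insert (N + 1 : ℤ) (Icc (-N : ℤ) N)) := by
      ext j; simp only [mem_Icc, mem_insert]; omega
    rw [hI, sum_insert (by simp; omega), sum_insert (by simp), ih, sum_Icc_succ_top (by omega)]
    push_cast
    abel

theorem dvd_mul_sub_one {A : Type*} [CommRing A] {d f g : A} (hf : d ∣ f - 1) (hg : d ∣ g - 1) :
    d ∣ f * g - 1 := by
  rw [show f * g - 1 = (f - 1) * g + (g - 1) by ring]
  exact dvd_add (dvd_mul_of_dvd_left hf g) hg

theorem pow_dvd_prod_one_sub_pow_sub_one {A : Type*} [CommRing A] (x : A) {s : Finset ℕ} {m : ℕ}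
    (hs : ∀ k ∈ s, m ≤ k) : x ^ m ∣ ∏ k ∈ s, (1 - x ^ k) - 1 := by
  classical
  induction s using Finset.induction with
  | empty => simp
  | insert a s ha ih =>
    rw [prod_insert ha]
    refine dvd_mul_sub_one ?_ (ih fun k hk => hs k (mem_insert_of_mem hk))
    rw [sub_sub_cancel_left, dvd_neg]
    exact pow_dvd_pow x (hs a (mem_insert_self a s))

theorem prod_one_add_pow_mul_prod_one_sub_pow_odd {A : Type*} [CommRing A] (x : A) (N : ℕ) :
    (∏ k ∈ Icc 1 N, (1 + x ^ k)) * ∏ i ∈ range N, (1 - x ^ (2 * i + 1))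
      = ∏ k ∈ Ioc N (2 * N), (1 - x ^ k) := by
  induction N with
  | zero => simp
  | succ N ih =>
    have hsplit : ∏ k ∈ Ioc (N + 1) (2 * (N + 1)), (1 - x ^ k)
        = (∏ k ∈ Ioc (N + 1) (2 * N + 1), (1 - x ^ k)) * (1 - x ^ (N + 1)) * (1 + x ^ (N + 1)) := by
      rw [show 2 * (N + 1) = 2 * N + 1 + 1 by ring, prod_Ioc_succ_top (by omega)]
      ring
    have hbot : (∏ k ∈ Ioc (N + 1) (2 * N + 1), (1 - x ^ k)) * (1 - x ^ (N + 1))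
        = (∏ k ∈ Ioc N (2 * N), (1 - x ^ k)) * (1 - x ^ (2 * N + 1)) := by
      rw [mul_comm, ← prod_insert (f := fun k => 1 - x ^ k) (by simp),
        insert_Ioc_add_one_left_eq_Ioc (by omega), prod_Ioc_succ_top (by omega)]
    rw [prod_Icc_succ_top (by omega), prod_range_succ, hsplit, hbot, ← ih]
    ring

theorem Nat.sq_add_sq_mod_four_ne_three (i j : ℕ) : (i ^ 2 + j ^ 2) % 4 ≠ 3 := by
  rw [Nat.add_mod, Nat.pow_mod, Nat.pow_mod j]
  have hi := Nat.mod_lt i (by norm_num : 4 > 0)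
  have hj := Nat.mod_lt j (by norm_num : 4 > 0)
  interval_cases i % 4 <;> interval_cases j % 4 <;> decide

namespace LaurentPolynomial

variable {R : Type*} [CommRing R]

/-- Gaussian binomial coefficients, taken as Laurent polynomials so that both `q`-Pascal rules hold
for every `k : ℤ` without case distinctions. -/
noncomputable def gaussBinom : ℕ → ℤ → R[T;T⁻¹]
  | 0, k => if k = 0 then 1 else 0
  | m + 1, k => gaussBinom m (k - 1) + T k * gaussBinom m k

theorem gaussBinom_succ (m : ℕ) (k : ℤ) :
    (gaussBinom (m + 1) k : R[T;T⁻¹]) = gaussBinom m (k - 1) + T k * gaussBinom m k :=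
  rfl

theorem gaussBinom_of_neg {m : ℕ} {k : ℤ} (hk : k < 0) : (gaussBinom m k : R[T;T⁻¹]) = 0 := by
  induction m generalizing k with
  | zero => simp [gaussBinom, hk.ne]
  | succ m ih => rw [gaussBinom_succ, ih (by omega), ih hk, mul_zero, add_zero]

theorem gaussBinom_of_lt {m : ℕ} {k : ℤ} (hk : m < k) : (gaussBinom m k : R[T;T⁻¹]) = 0 := by
  induction m generalizing k with
  | zero => simp [gaussBinom, show k ≠ 0 by omega]
  | succ m ih => rw [gaussBinom_succ, ih (by omega), ih (by omega), mul_zero, add_zero]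

theorem gaussBinom_zero_right (m : ℕ) : (gaussBinom m 0 : R[T;T⁻¹]) = 1 := by
  induction m with
  | zero => simp [gaussBinom]
  | succ m ih => rw [gaussBinom_succ, gaussBinom_of_neg (by omega), ih, T_zero, mul_one, zero_add]

theorem gaussBinom_self (m : ℕ) : (gaussBinom m m : R[T;T⁻¹]) = 1 := by
  induction m with
  | zero => simp [gaussBinom]
  | succ m ih =>
    rw [Nat.cast_succ, gaussBinom_succ, add_sub_cancel_right, ih, gaussBinom_of_lt (by omega),
      mul_zero, add_zero]

theorem gaussBinom_succ' (m : ℕ) (k : ℤ) :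
    (gaussBinom (m + 1) k : R[T;T⁻¹]) = T (m + 1 - k) * gaussBinom m (k - 1) + gaussBinom m k := by
  induction m generalizing k with
  | zero =>
    rw [gaussBinom_succ]
    rcases eq_or_ne k 0 with rfl | h0
    · simp [gaussBinom]
    rcases eq_or_ne k 1 with rfl | h1
    · simp [gaussBinom]
    simp [gaussBinom, h0, h1, sub_eq_zero]
  | succ m ih =>
    have h₁ : (T k * T ((m : ℤ) + 1 - k) : R[T;T⁻¹]) = T (m + 1) := by rw [← T_add]; ring_nf
    have h₂ : (T ((m : ℤ) + 1 - (k - 1)) * T (k - 1) : R[T;T⁻¹]) = T (m + 1) := by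
      rw [← T_add]; ring_nf
    rw [gaussBinom_succ (m + 1) k,
      show ((m + 1 : ℕ) : ℤ) + 1 - k = m + 1 - (k - 1) by push_cast; ring]
    linear_combination ih (k - 1) - T ((m : ℤ) + 1 - (k - 1)) * gaussBinom_succ (R := R) m (k - 1)
      + T k * ih k - gaussBinom_succ (R := R) m k + gaussBinom m (k - 1) * (h₁ - h₂)

theorem gaussBinom_eq_zero_of_notMem {m : ℕ} {k : ℤ} (hk : k ∉ Icc 0 (m : ℤ)) :
    (gaussBinom m k : R[T;T⁻¹]) = 0 := by
  rw [mem_Icc, not_and_or, not_le, not_le] at hk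
  exact hk.elim gaussBinom_of_neg gaussBinom_of_lt

theorem gaussBinom_symm (m : ℕ) (k : ℤ) :
    (gaussBinom m k : R[T;T⁻¹]) = gaussBinom m (m - k) := by
  induction m generalizing k with
  | zero =>
    rcases eq_or_ne k 0 with rfl | h0
    · simp
    · simp [gaussBinom, h0]
  | succ m ih =>
    rw [gaussBinom_succ, gaussBinom_succ', ih, ih k]
    push_cast
    ring_nf

theorem gaussBinom_mul_prod_one_sub_T (a b : ℕ) :
    (gaussBinom (a + b) a : R[T;T⁻¹]) * ∏ k ∈ Icc 1 a, (1 - T k)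
      = ∏ k ∈ Ioc b (a + b), (1 - T k) := by
  induction a generalizing b with
  | zero => simp [gaussBinom_zero_right]
  | succ a iha =>
    induction b with
    | zero => rw [add_zero, gaussBinom_self, one_mul, ← Icc_add_one_left_eq_Ioc, zero_add]
    | succ b ihb =>
      have hg : (gaussBinom (a + 1 + (b + 1)) (a + 1 : ℕ) : R[T;T⁻¹])
          = gaussBinom (a + (b + 1)) a + T (a + 1 : ℕ) * gaussBinom (a + 1 + b) (a + 1 : ℕ) := by
        rw [show a + 1 + (b + 1) = a + (b + 1) + 1 by ring, gaussBinom_succ,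
          show a + (b + 1) = a + 1 + b by ring]
        push_cast; ring_nf
      have hQ : ∏ k ∈ Ioc b (a + 1 + b), (1 - T k : R[T;T⁻¹])
          = (1 - T (b + 1 : ℕ)) * ∏ k ∈ Ioc (b + 1) (a + (b + 1)), (1 - T k) := by
        rw [← insert_Ioc_add_one_left_eq_Ioc (by omega), prod_insert (by simp),
          show a + 1 + b = a + (b + 1) by ring]
      have hR : ∏ k ∈ Ioc (b + 1) (a + 1 + (b + 1)), (1 - T k : R[T;T⁻¹])
          = (∏ k ∈ Ioc (b + 1) (a + (b + 1)), (1 - T k)) * (1 - T (a + 1 + (b + 1) : ℕ)) := by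
        rw [show a + 1 + (b + 1) = a + (b + 1) + 1 by ring, prod_Ioc_succ_top (by omega)]
      have hT : (T (a + 1 : ℕ) * T (b + 1 : ℕ) : R[T;T⁻¹]) = T (a + 1 + (b + 1) : ℕ) := by
        rw [← T_add]; push_cast; ring_nf
      rw [hQ, prod_Icc_succ_top (by omega)] at ihb
      rw [hg, hR, prod_Icc_succ_top (by omega)]
      linear_combination (1 - T (a + 1 : ℕ)) * iha (b + 1) + T (a + 1 : ℕ) * ihb
        - (∏ k ∈ Ioc (b + 1) (a + (b + 1)), (1 - T k : R[T;T⁻¹])) * hT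

theorem gaussBinom_add_two (m : ℕ) (k : ℤ) :
    (gaussBinom (m + 2) k : R[T;T⁻¹]) = T (m + 2 - k) * gaussBinom m (k - 2)
      + (1 + T k) * gaussBinom m (k - 1) + T k * T k * gaussBinom m k := by
  rw [gaussBinom_succ, gaussBinom_succ', gaussBinom_succ m k]
  ring_nf

theorem negOnePow_smul_T_sq_mul_gaussBinom_succ (n : ℕ) (j : ℤ) :
    j.negOnePow • (T (j ^ 2) * gaussBinom (2 * (n + 1)) ((n + 1 : ℕ) + j) : R[T;T⁻¹])
      = j.negOnePow • (T (j ^ 2) * gaussBinom (2 * n) (n + j))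
        + T (n + 1) * (j.negOnePow • (T (j ^ 2 + j) * gaussBinom (2 * n) (n + j)))
        - T (n + 1)
          * ((j - 1).negOnePow • (T ((j - 1) ^ 2 + (j - 1)) * gaussBinom (2 * n) (n + (j - 1))))
        - T (2 * n + 1)
          * ((j + 1).negOnePow • (T ((j + 1) ^ 2) * gaussBinom (2 * n) (n + (j + 1)))) := by
  have e₁ : (T (j ^ 2) * T (2 * n + 2 - (n + (j + 1))) : R[T;T⁻¹])
      = T (n + 1) * T ((j - 1) ^ 2 + (j - 1)) := by
    rw [← T_add, ← T_add]; ring_nf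
  have e₂ : (T (j ^ 2) * T (n + (j + 1)) : R[T;T⁻¹]) = T (n + 1) * T (j ^ 2 + j) := by
    rw [← T_add, ← T_add]; ring_nf
  have e₃ : (T (j ^ 2) * (T (n + (j + 1)) * T (n + (j + 1))) : R[T;T⁻¹])
      = T (2 * n + 1) * T ((j + 1) ^ 2) := by
    rw [← T_add, ← T_add, ← T_add]; ring_nf
  rw [show 2 * (n + 1) = 2 * n + 2 by ring, gaussBinom_add_two]
  simp only [Units.smul_def, zsmul_eq_mul, Int.negOnePow_sub, Int.negOnePow_succ, Int.negOnePow_one]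
  push_cast
  rw [show (n : ℤ) + 1 + j - 2 = n + (j - 1) by ring, show (n : ℤ) + 1 + j - 1 = n + j by ring,
    show (n : ℤ) + 1 + j = n + (j + 1) by ring]
  set s : R[T;T⁻¹] := ((j.negOnePow : ℤ) : R[T;T⁻¹])
  linear_combination s * gaussBinom (2 * n) (n + (j - 1)) * e₁
    + s * gaussBinom (2 * n) (n + j) * e₂ + s * gaussBinom (2 * n) (n + (j + 1)) * e₃

/-- A finite form of Gauss's identity `∑ⱼ (-1)^j q^{j²} = ∏ₖ (1 - q^k)/(1 + q^k)`. -/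
theorem sum_negOnePow_smul_T_sq_mul_gaussBinom (n : ℕ) :
    ∑ j ∈ Icc (-n : ℤ) n, j.negOnePow • (T (j ^ 2) * gaussBinom (2 * n) (n + j) : R[T;T⁻¹])
      = ∏ i ∈ range n, (1 - T (2 * i + 1)) := by
  induction n with
  | zero => simp [gaussBinom]
  | succ n ih =>
    set g : ℤ → R[T;T⁻¹] := gaussBinom (2 * n)
    set t : ℤ → R[T;T⁻¹] := fun j => j.negOnePow • (T (j ^ 2) * g (n + j))
    set v : ℤ → R[T;T⁻¹] := fun j => j.negOnePow • (T (j ^ 2 + j) * g (n + j))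
    have hstep : ∀ j : ℤ, j.negOnePow • (T (j ^ 2) * gaussBinom (2 * (n + 1)) ((n + 1 : ℕ) + j))
        = t j + T (n + 1) * v j - T (n + 1) * v (j - 1) - T (2 * n + 1) * t (j + 1) :=
      negOnePow_smul_T_sq_mul_gaussBinom_succ n
    have hsupp : ∀ (x : ℤ → R[T;T⁻¹]) j, j.negOnePow • (x j * g (n + j)) ≠ 0 →
        j ∈ Icc (-n : ℤ) n := by
      intro x j h
      by_contra hj
      refine h ?_
      have hg : g (n + j) = 0 :=
        gaussBinom_eq_zero_of_notMem (by simp only [mem_Icc] at hj ⊢; omega)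
      rw [hg, mul_zero, smul_zero]
    have hwin : ∀ f : ℤ → R[T;T⁻¹], (∀ j, f j ≠ 0 → j ∈ Icc (-n : ℤ) n) → ∀ c ∈ Icc (-1 : ℤ) 1,
        ∑ j ∈ Icc (-(n + 1 : ℕ) : ℤ) (n + 1 : ℕ), f (j + c) = ∑ j ∈ Icc (-n : ℤ) n, f j := by
      intro f hf c hc
      rw [mem_Icc] at hc
      exact sum_Icc_comp_add_of_support hf (by push_cast; omega) (by push_cast; omega)
    have ht := hwin t (hsupp fun j => T (j ^ 2))
    have hv := hwin v (hsupp fun j => T (j ^ 2 + j))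
    have ht₀ := ht 0 (by simp)
    have hv₀ := hv 0 (by simp)
    have hv₁ := hv (-1) (by simp)
    simp only [add_zero, ← sub_eq_add_neg] at ht₀ hv₀ hv₁
    rw [sum_congr rfl fun j _ => hstep j, sum_sub_distrib, sum_sub_distrib, sum_add_distrib,
      ← mul_sum, ← mul_sum, ← mul_sum, ht₀, hv₀, hv₁, ht 1 (by simp), ih, prod_range_succ]
    ring

end LaurentPolynomial

namespace Polynomial

open LaurentPolynomial

variable {R : Type*} [CommRing R]

noncomputable def qBinom (m : ℕ) (k : ℤ) : R[X] :=
  LaurentPolynomial.trunc (gaussBinom m k)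

theorem gaussBinom_mem_range (m : ℕ) (k : ℤ) :
    gaussBinom m k ∈ (toLaurent : R[X] →+* R[T;T⁻¹]).range := by
  induction m generalizing k with
  | zero =>
    unfold gaussBinom
    split_ifs
    exacts [one_mem _, zero_mem _]
  | succ m ih =>
    rw [gaussBinom_succ]
    refine add_mem (ih _) ?_
    rcases lt_or_ge k 0 with hk | hk
    · rw [gaussBinom_of_neg hk, mul_zero]
      exact zero_mem _
    · exact mul_mem ⟨X ^ k.toNat, by rw [toLaurent_X_pow, Int.toNat_of_nonneg hk]⟩ (ih k)

@[simp]
theorem toLaurent_qBinom (m : ℕ) (k : ℤ) : toLaurent (qBinom m k : R[X]) = gaussBinom m k := by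
  obtain ⟨p, hp⟩ := gaussBinom_mem_range (R := R) m k
  rw [qBinom, ← hp, trunc_toLaurent]

theorem qBinom_symm (m : ℕ) (k : ℤ) : (qBinom m k : R[X]) = qBinom m (m - k) :=
  toLaurent_injective (by simp [gaussBinom_symm m k])

theorem qBinom_mul_prod_one_sub_X_pow (a b : ℕ) :
    (qBinom (a + b) a : R[X]) * ∏ k ∈ Icc 1 a, (1 - X ^ k) = ∏ k ∈ Ioc b (a + b), (1 - X ^ k) :=
  toLaurent_injective (by simp [gaussBinom_mul_prod_one_sub_T])

theorem sum_negOnePow_smul_X_pow_mul_qBinom (n : ℕ) :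
    ∑ j ∈ Icc (-n : ℤ) n, j.negOnePow • (X ^ (j.natAbs ^ 2) * qBinom (2 * n) (n + j) : R[X])
      = ∏ i ∈ range n, (1 - X ^ (2 * i + 1)) :=
  toLaurent_injective (by simp [← sum_negOnePow_smul_T_sq_mul_gaussBinom])

theorem X_pow_dvd_qBinom_mul_prod_sub_one {N : ℕ} {j : ℤ} (hj : j ∈ Icc (-N : ℤ) N) :
    (X : R[X]) ^ (N - j.natAbs + 1) ∣ qBinom (2 * N) (N + j) * ∏ k ∈ Icc 1 N, (1 - X ^ k) - 1 := by
  rw [mem_Icc] at hj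
  set a := N - j.natAbs
  set b := N + j.natAbs
  have hq : (qBinom (2 * N) (N + j) : R[X]) = qBinom (a + b) a := by
    rcases le_or_gt j 0 with h | h
    · congr 1 <;> omega
    · rw [qBinom_symm]; congr 1 <;> push_cast <;> omega
  have hIcc : ∀ n : ℕ, Icc 1 n = Ioc 0 n := fun n => Icc_add_one_left_eq_Ioc 0 n
  have hP : ∏ k ∈ Icc 1 N, (1 - X ^ k : R[X])
      = (∏ k ∈ Icc 1 a, (1 - X ^ k)) * ∏ k ∈ Ioc a N, (1 - X ^ k) := by
    rw [hIcc, hIcc, prod_Ioc_consecutive _ (Nat.zero_le a) (by omega)]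
  have hdisj : Disjoint (Ioc b (a + b)) (Ioc a N) :=
    disjoint_left.mpr fun k h₁ h₂ => by simp only [mem_Ioc] at h₁ h₂; omega
  rw [hq, hP, ← mul_assoc, qBinom_mul_prod_one_sub_X_pow, ← prod_union hdisj]
  exact pow_dvd_prod_one_sub_pow_sub_one X fun k hk => by
    simp only [mem_union, mem_Ioc] at hk; omega

noncomputable def thetaTail (N : ℕ) : R[X] :=
  ∑ j ∈ Icc 1 N, monomial (j ^ 2) ((-1) ^ j)

theorem sum_negOnePow_smul_X_pow_natAbs_sq (N : ℕ) :
    ∑ j ∈ Icc (-N : ℤ) N, j.negOnePow • (X ^ (j.natAbs ^ 2) : R[X]) = 1 + 2 * thetaTail N := by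
  rw [sum_Icc_neg_eq_add_sum_add_neg, thetaTail, mul_sum]
  congr 1
  · simp
  refine sum_congr rfl fun j _ => ?_
  simp [Units.smul_def, ← C_mul_X_pow_eq_monomial]
  ring

theorem X_pow_dvd_one_add_two_mul_thetaTail_sub (N : ℕ) :
    (X : R[X]) ^ (N + 1)
      ∣ 1 + 2 * thetaTail N
        - (∏ i ∈ range N, (1 - X ^ (2 * i + 1))) * ∏ k ∈ Icc 1 N, (1 - X ^ k) := by
  rw [← sum_negOnePow_smul_X_pow_natAbs_sq, ← sum_negOnePow_smul_X_pow_mul_qBinom, sum_mul,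
    ← sum_sub_distrib]
  refine dvd_sum fun j hj => ?_
  rw [smul_mul_assoc, ← smul_sub, mul_assoc, ← mul_one_sub, Units.smul_def, zsmul_eq_mul]
  refine dvd_mul_of_dvd_right ?_ _
  have hexp : N + 1 ≤ j.natAbs ^ 2 + (N - j.natAbs + 1) := by
    have := Nat.le_self_pow two_ne_zero j.natAbs
    omega
  calc (X : R[X]) ^ (N + 1) ∣ X ^ (j.natAbs ^ 2) * X ^ (N - j.natAbs + 1) := by
        rw [← pow_add]; exact pow_dvd_pow _ hexp
    _ ∣ _ := mul_dvd_mul_left _ (dvd_sub_comm.mp (X_pow_dvd_qBinom_mul_prod_sub_one hj))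

theorem coeff_thetaTail_eq_zero {N m : ℕ} (hm : m % 4 = 3) : (thetaTail N : R[X]).coeff m = 0 := by
  rw [thetaTail, finsetSum_coeff]
  refine sum_eq_zero fun j _ => ?_
  rw [coeff_monomial, if_neg]
  rintro rfl
  exact Nat.sq_add_sq_mod_four_ne_three 0 j (by simpa using hm)

theorem coeff_thetaTail_sq_eq_zero {N m : ℕ} (hm : m % 4 = 3) :
    (thetaTail N ^ 2 : R[X]).coeff m = 0 := by
  rw [sq, thetaTail, sum_mul_sum, finsetSum_coeff]
  refine sum_eq_zero fun i _ => ?_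
  rw [finsetSum_coeff]
  refine sum_eq_zero fun j _ => ?_
  rw [monomial_mul_monomial, coeff_monomial, if_neg]
  rintro rfl
  exact Nat.sq_add_sq_mod_four_ne_three i j hm

end Polynomial

theorem fps_mul_one_sub_X_pow {k : ℕ} (hk : 1 ≤ k) : fps k * (1 - X ^ k) = 1 + X ^ k := by
  rw [fps, mul_assoc, mul_comm (invOfUnit _ _),
    mul_invOfUnit _ 1 (by simp [zero_pow (by omega : k ≠ 0)]), mul_one]

theorem X_pow_dvd_prod_fps_mul_sub_one (N : ℕ) :
    X ^ (N + 1)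
      ∣ (∏ k ∈ Icc 1 N, fps k) * (1 + 2 * (Polynomial.thetaTail (R := ℤ) N : ℤ⟦X⟧)) - 1 := by
  set F := ∏ k ∈ Icc 1 N, fps k
  set θ : ℤ⟦X⟧ := 1 + 2 * (Polynomial.thetaTail (R := ℤ) N : ℤ⟦X⟧)
  set P := ∏ k ∈ Icc 1 N, (1 - X ^ k : ℤ⟦X⟧)
  set O := ∏ i ∈ range N, (1 - X ^ (2 * i + 1) : ℤ⟦X⟧)
  set E := ∏ k ∈ Icc 1 N, (1 + X ^ k : ℤ⟦X⟧)
  have hFP : F * P = E := by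
    rw [← prod_mul_distrib]
    exact prod_congr rfl fun k hk => fps_mul_one_sub_X_pow (mem_Icc.mp hk).1
  have hθ : X ^ (N + 1) ∣ θ - O * P := by
    have h := map_dvd (Polynomial.coeToPowerSeries.ringHom (R := ℤ))
      (Polynomial.X_pow_dvd_one_add_two_mul_thetaTail_sub N)
    simpa only [map_sub, map_add, map_mul, map_prod, map_pow, map_one, map_ofNat,
      Polynomial.coeToPowerSeries.ringHom_apply, Polynomial.coe_X] using h
  have hEO : X ^ (N + 1) ∣ E * O - 1 := by
    rw [prod_one_add_pow_mul_prod_one_sub_pow_odd]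
    exact pow_dvd_prod_one_sub_pow_sub_one X fun k hk => (mem_Ioc.mp hk).1
  rw [show F * θ - 1 = F * (θ - O * P) + (E * O - 1) by rw [← hFP]; ring]
  exact dvd_add (dvd_mul_of_dvd_right hθ F) hEO

theorem PowerSeries.coeff_mul_of_X_pow_dvd_sub_one {R : Type*} [CommRing R] {f g : R⟦X⟧} {N : ℕ}
    (h : X ^ (N + 1) ∣ g - 1) : coeff N (f * g) = coeff N f := by
  have := X_pow_dvd_iff.mp (dvd_mul_of_dvd_right h f) N (Nat.lt_succ_self N)
  rwa [mul_sub, mul_one, map_sub, sub_eq_zero] at this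

/-- For all `n ≥ 0`, `p̄(4n+3) ≡ 0 (mod 8)`. -/
theorem pbar_four_n_three_mod_eight (n : ℕ) :
    pbar (4 * n + 3) ≡ 0 [ZMOD 8] := by
  set N := 4 * n + 3
  set F := ∏ k ∈ Icc 1 N, fps k
  set T : ℤ⟦X⟧ := (Polynomial.thetaTail (R := ℤ) N : ℤ⟦X⟧)
  have hN : N % 4 = 3 := by omega
  have hT : coeff N T = 0 := by
    rw [Polynomial.coeff_coe, Polynomial.coeff_thetaTail_eq_zero hN]
  have hT2 : coeff N (T ^ 2) = 0 := by
    rw [← Polynomial.coe_pow, Polynomial.coeff_coe, Polynomial.coeff_thetaTail_sq_eq_zero hN]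
  have hF : F = (1 - C 2 * T + C 4 * T ^ 2) * (F * (1 + 2 * T)) - C 8 * (F * T ^ 3) := by
    simp only [map_ofNat]; ring
  have hpbar : coeff N F = -8 * coeff N (F * T ^ 3) := by
    conv_lhs => rw [hF]
    rw [map_sub, coeff_mul_of_X_pow_dvd_sub_one (X_pow_dvd_prod_fps_mul_sub_one N), map_add,
      map_sub, coeff_C_mul, coeff_C_mul, coeff_C_mul, hT, hT2, coeff_one, if_neg (by omega)]
    ring
  change coeff N F ≡ 0 [ZMOD 8]
  rw [hpbar]
  exact Int.modEq_zero_iff_dvd.mpr ⟨-coeff N (F * T ^ 3), by ring⟩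
end

section
/- For all integers n ≥ 1, pl̄_4(3n) ≡ 0 (mod 4), where pl̄_4(m) counts plane overpartitions of m with at most 4 rows. -/
open PowerSeries

/-- The number of plane overpartitions of `n` with at most `K` rows: the coefficient
of `q^n` in `∏_{k≥1} ((1+q^k)/(1-q^k))^(min K k)`, truncated at `k = n`. -/
noncomputable def plbark (K n : ℕ) : ℤ :=
  PowerSeries.coeff n (∏ k ∈ Finset.Icc 1 n, fps k ^ min K k)

/-! Modulo 4, `(1 + q^k)/(1 - q^k) = 1 + 2 q^k/(1 - q^k)` has the form `1 + 2u`, whose square is `1`.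
So only the factors with odd exponent `min 4 k`, i.e. `k = 1` and `k = 3`, survive, and the
generating function of `pl̄₄` is `≡ 1 + 2 (∑_{j ≥ 1} q^j + ∑_{j ≥ 1} q^{3j})`, whose coefficient of
`q^{3n}` for `n ≥ 1` is `2 · 2 ≡ 0`. -/

/-- `∑_{j ≥ 1} q^{jk} = q^k / (1 - q^k)` -/
def multiplesSeries (R : Type*) [Semiring R] (k : ℕ) : R⟦X⟧ :=
  mk fun m => if 0 < m ∧ k ∣ m then 1 else 0

theorem coeff_multiplesSeries_of_dvd {R : Type*} [Semiring R] {k m : ℕ} (hm : 0 < m)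
    (hkm : k ∣ m) : coeff m (multiplesSeries R k) = 1 := by
  simp [multiplesSeries, hm, hkm]

theorem one_sub_X_pow_mul_multiplesSeries {R : Type*} [Ring R] {k : ℕ} (hk : 0 < k) :
    (1 - X ^ k) * multiplesSeries R k = X ^ k := by
  ext m
  rw [sub_mul, one_mul, map_sub, coeff_X_pow_mul', coeff_X_pow]
  simp only [multiplesSeries, coeff_mk]
  rcases lt_trichotomy m k with hlt | rfl | hgt
  · have : ¬(0 < m ∧ k ∣ m) := fun ⟨hm, hd⟩ => absurd (Nat.le_of_dvd hm hd) (by omega)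
    simp [this, hlt.ne, Nat.not_le.mpr hlt]
  · simp [hk]
  · have hd : k ∣ m - k ↔ k ∣ m := by simp [Nat.dvd_sub_self_right, Nat.not_le.mpr hgt]
    simp [hgt.le, hgt.ne', hd, show 0 < m - k by omega, show 0 < m by omega]

theorem fps_eq_one_add_two_mul_multiplesSeries {k : ℕ} (hk : 0 < k) :
    fps k = 1 + 2 * multiplesSeries ℤ k := by
  have hunit : constantCoeff (1 - X ^ k : ℤ⟦X⟧) = ((1 : ℤˣ) : ℤ) := by
    simp [hk.ne']
  have hne : (1 - X ^ k : ℤ⟦X⟧) ≠ 0 := fun h => by simp [h] at hunit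
  apply mul_left_cancel₀ hne
  rw [fps, mul_left_comm, mul_invOfUnit _ _ hunit, mul_add, mul_left_comm,
    one_sub_X_pow_mul_multiplesSeries hk]
  ring

section CharFour

variable {R : Type*} [CommRing R]

theorem one_add_two_mul_pow_eq_pow_mod_two (h4 : (4 : R) = 0) (u : R) (e : ℕ) :
    (1 + 2 * u) ^ e = (1 + 2 * u) ^ (e % 2) := by
  have hsq : (1 + 2 * u) ^ 2 = 1 := by linear_combination (u + u ^ 2) * h4
  conv_lhs => rw [← Nat.mod_add_div e 2, pow_add, pow_mul, hsq, one_pow, mul_one]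

theorem prod_one_add_two_mul_pow_min_four (h4 : (4 : R) = 0) (u : ℕ → R) {N : ℕ} (hN : 3 ≤ N) :
    ∏ k ∈ Finset.Icc 1 N, (1 + 2 * u k) ^ min 4 k = 1 + 2 * (u 1 + u 3) := by
  have hsub : ({1, 3} : Finset ℕ) ⊆ Finset.Icc 1 N := by
    intro k hk
    simp only [Finset.mem_insert, Finset.mem_singleton] at hk
    simp only [Finset.mem_Icc]
    omega
  rw [Finset.prod_congr rfl fun k _ => one_add_two_mul_pow_eq_pow_mod_two h4 (u k) _,
    ← Finset.prod_subset hsub]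
  · rw [Finset.prod_pair (by norm_num)]
    norm_num
    linear_combination u 1 * u 3 * h4
  · intro k hk hk13
    simp only [Finset.mem_Icc, Finset.mem_insert, Finset.mem_singleton] at hk hk13
    rw [show min 4 k % 2 = 0 by omega, pow_zero]

end CharFour

theorem map_prod_fps_pow_min_four {N : ℕ} (hN : 3 ≤ N) :
    map (Int.castRingHom (ZMod 4)) (∏ k ∈ Finset.Icc 1 N, fps k ^ min 4 k)
      = 1 + 2 * (map (Int.castRingHom (ZMod 4)) (multiplesSeries ℤ 1)
        + map (Int.castRingHom (ZMod 4)) (multiplesSeries ℤ 3)) := by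
  have h4 : (4 : (ZMod 4)⟦X⟧) = 0 := by
    rw [← map_ofNat C 4]
    exact (map_eq_zero_iff _ C_injective).mpr (by decide)
  have hfactor : ∀ k ∈ Finset.Icc 1 N, map (Int.castRingHom (ZMod 4)) (fps k ^ min 4 k)
      = (1 + 2 * map (Int.castRingHom (ZMod 4)) (multiplesSeries ℤ k)) ^ min 4 k := by
    intro k hk
    rw [fps_eq_one_add_two_mul_multiplesSeries (Finset.mem_Icc.mp hk).1, map_pow, map_add,
      map_one, map_mul, map_ofNat]
  rw [map_prod, Finset.prod_congr rfl hfactor, prod_one_add_two_mul_pow_min_four h4 _ hN]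

/-- For all `n ≥ 1`, `pl̄₄(3n) ≡ 0 (mod 4)`. -/
theorem plbark_four_three_n_mod_four (n : ℕ) (hn : 1 ≤ n) :
    plbark 4 (3 * n) ≡ 0 [ZMOD 4] := by
  have hpos : 0 < 3 * n := by omega
  have hcoeff : ((plbark 4 (3 * n) : ℤ) : ZMod 4) = 0 := by
    rw [plbark, ← eq_intCast (Int.castRingHom (ZMod 4)), ← coeff_map,
      map_prod_fps_pow_min_four (by omega), map_add, coeff_one, if_neg hpos.ne', zero_add,
      ← map_ofNat C 2, coeff_C_mul, map_add, coeff_map, coeff_map,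
      coeff_multiplesSeries_of_dvd hpos (one_dvd _),
      coeff_multiplesSeries_of_dvd hpos (dvd_mul_right 3 n), map_one]
    decide
  exact (ZMod.intCast_eq_intCast_iff _ 0 4).mp (by simpa using hcoeff)
end
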